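/- Let a, b : Γ → ℂ be finitely supported functions with supp(a) ⊆ B_n and supp(b) ⊆ B_m, and let a∗b denote their convolution, (a∗b)(g) := Σ_{h∈Γ} a(h)·b(h⁻¹g). Then: ‖(a∗b)·1_{S_0}‖₂ ≤ ‖a‖₂·‖b‖₂; for every integer k with 1 ≤ k ≤ n+m, ‖(a∗b)·1_{S_k}‖₂ ≤ (n+m+1−k)²·‖a‖₂·‖b‖₂; and (a∗b)·1_{S_k} = 0 for every k > n+m. -/

import Mathlib

/-
Haagerup's inequality, proved sphere by sphere. For `|g| = k`, split `(a * b) g` according to the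
lengths `s = |h|`, `t = |h⁻¹ g|` of the two factors. In a free group the reduced word of `g` is then
forced: `h = p c`, `h⁻¹ g = c⁻¹ q` and `g = p q` with `|c| = j = (s + t - k) / 2`, so `h` begins with
the first `s - j` letters of `g` and `h⁻¹ g` ends with the remaining ones. Cauchy–Schwarz at each `g`
bounds the `(s, t)`-piece by the mass of `a` on words with that prefix times the mass of `b` on words
with that suffix; since `g` is recovered from its prefix and suffix, summing over `g` gives at most
`‖a‖₂² ‖b‖₂²`. Minkowski's inequality over the at most `(n + m + 1 - k)²` admissible pairs `(s, t)`
finishes; on `S₀ = {e}` plain Cauchy–Schwarz already gives `‖a‖₂ ‖b‖₂`.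
-/

open MeasureTheory Filter Matrix
open scoped ENNReal ComplexOrder

noncomputable section

namespace Annealed

abbrev FG (r : ℕ) := FreeGroup (Fin r)

def wlen {r : ℕ} (g : FG r) : ℕ := (FreeGroup.toWord g).length

def l2norm {r : ℕ} (a : MonoidAlgebra ℂ (FG r)) : ℝ :=
  Real.sqrt (∑ g ∈ a.coeff.support, ‖a.coeff g‖ ^ 2)

def l2normSphere {r : ℕ} (a : MonoidAlgebra ℂ (FG r)) (m : ℕ) : ℝ :=
  Real.sqrt (∑ g ∈ a.coeff.support.filter (fun g => wlen g = m), ‖a.coeff g‖ ^ 2)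

end Annealed

open Finset

section CauchySchwarz

variable {ι α β κ μ R : Type*} [SeminormedRing R]

theorem sum_sq_norm_le_sum_fiber [DecidableEq κ] (a : α →₀ R) (P : α → κ) {p : κ}
    {s : Finset α} (hs : ∀ h ∈ s, P h = p) :
    ∑ h ∈ s, ‖a h‖ ^ 2 ≤ ∑ h ∈ a.support with P h = p, ‖a h‖ ^ 2 := by
  classical
  have hne : ∀ h ∈ s, ‖a h‖ ^ 2 ≠ 0 → h ∈ a.support := fun h _ hh => by
    contrapose! hh; simp [Finsupp.notMem_support_iff.1 hh]
  rw [← sum_filter_of_ne hne]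
  refine sum_le_sum_of_subset_of_nonneg (fun h hh => ?_) (fun _ _ _ => by positivity)
  simp only [mem_filter] at hh ⊢
  exact ⟨hh.2, hs h hh.1⟩

theorem sum_sq_norm_sum_mul_le [DecidableEq κ] [DecidableEq μ] (a : α →₀ R) (b : β →₀ R)
    (G : Finset ι) (F : ι → Finset α) (φ : ι → α → β) (hφ : ∀ g, Function.Injective (φ g))
    (P : α → κ) (Q : β → μ) (K : ι → κ × μ) (hK : Set.InjOn K G)
    (hPQ : ∀ g ∈ G, ∀ h ∈ F g, P h = (K g).1 ∧ Q (φ g h) = (K g).2) :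
    ∑ g ∈ G, ‖∑ h ∈ F g, a h * b (φ g h)‖ ^ 2 ≤
      (∑ h ∈ a.support, ‖a h‖ ^ 2) * ∑ x ∈ b.support, ‖b x‖ ^ 2 := by
  classical
  set X : κ → ℝ := fun p => ∑ h ∈ a.support with P h = p, ‖a h‖ ^ 2
  set Y : μ → ℝ := fun q => ∑ x ∈ b.support with Q x = q, ‖b x‖ ^ 2
  have hterm : ∀ g ∈ G, ‖∑ h ∈ F g, a h * b (φ g h)‖ ^ 2 ≤ X (K g).1 * Y (K g).2 := by
    intro g hg
    calc ‖∑ h ∈ F g, a h * b (φ g h)‖ ^ 2 ≤ (∑ h ∈ F g, ‖a h‖ * ‖b (φ g h)‖) ^ 2 := by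
          gcongr
          exact (norm_sum_le _ _).trans (sum_le_sum fun h _ => norm_mul_le (a h) (b (φ g h)))
      _ ≤ (∑ h ∈ F g, ‖a h‖ ^ 2) * ∑ h ∈ F g, ‖b (φ g h)‖ ^ 2 := sum_mul_sq_le_sq_mul_sq _ _ _
      _ = (∑ h ∈ F g, ‖a h‖ ^ 2) * ∑ x ∈ (F g).image (φ g), ‖b x‖ ^ 2 := by
          rw [sum_image (hφ g).injOn]
      _ ≤ X (K g).1 * Y (K g).2 := by
          gcongr
          · exact sum_sq_norm_le_sum_fiber a P fun h hh => (hPQ g hg h hh).1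
          · refine sum_sq_norm_le_sum_fiber b Q fun x hx => ?_
            obtain ⟨h, hh, rfl⟩ := mem_image.1 hx
            exact (hPQ g hg h hh).2
  set S := G.image K
  calc ∑ g ∈ G, ‖∑ h ∈ F g, a h * b (φ g h)‖ ^ 2 ≤ ∑ g ∈ G, X (K g).1 * Y (K g).2 :=
        sum_le_sum hterm
    _ = ∑ z ∈ S, X z.1 * Y z.2 := (sum_image (f := fun z => X z.1 * Y z.2) hK).symm
    _ ≤ ∑ z ∈ S.image Prod.fst ×ˢ S.image Prod.snd, X z.1 * Y z.2 :=
        sum_le_sum_of_subset_of_nonneg subset_product fun _ _ _ => by positivity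
    _ = (∑ p ∈ S.image Prod.fst, X p) * ∑ q ∈ S.image Prod.snd, Y q := by
        rw [sum_product, sum_mul_sum]
    _ ≤ _ := by
        gcongr
        · exact sum_fiberwise_le_sum_of_sum_fiber_nonneg fun _ _ => by positivity
        · exact sum_fiberwise_le_sum_of_sum_fiber_nonneg fun _ _ => by positivity

end CauchySchwarz

theorem Real.sqrt_sum_sq_norm_sum_le {ι κ E : Type*} [SeminormedAddCommGroup E] (s : Finset ι)
    (t : Finset κ) (T : κ → ι → E) :
    √(∑ i ∈ s, ‖∑ p ∈ t, T p i‖ ^ 2) ≤ ∑ p ∈ t, √(∑ i ∈ s, ‖T p i‖ ^ 2) := by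
  have hnorm (f : ι → E) :
      ‖(WithLp.toLp 2 fun i : s => f i : PiLp 2 fun _ : s => E)‖ = √(∑ i ∈ s, ‖f i‖ ^ 2) := by
    rw [PiLp.norm_eq_of_L2]
    exact congrArg _ (sum_coe_sort s fun i => ‖f i‖ ^ 2)
  let V (p : κ) : PiLp 2 fun _ : s => E := WithLp.toLp 2 fun i => T p i
  calc √(∑ i ∈ s, ‖∑ p ∈ t, T p i‖ ^ 2) = ‖∑ p ∈ t, V p‖ := by
        rw [← hnorm]
        congr 1
        ext i
        simp [V]
    _ ≤ ∑ p ∈ t, ‖V p‖ := norm_sum_le _ _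
    _ = _ := sum_congr rfl fun p _ => hnorm _

namespace FreeGroup

variable {α : Type*} [DecidableEq α]

theorem IsReduced.exists_reduce_append {L₁ L₂ : List (α × Bool)} (h₁ : IsReduced L₁)
    (h₂ : IsReduced L₂) :
    ∃ p c q, L₁ = p ++ c ∧ L₂ = invRev c ++ q ∧ reduce (L₁ ++ L₂) = p ++ q := by
  induction L₂ generalizing L₁ with
  | nil => exact ⟨L₁, [], [], by simp, by simp [invRev], by simpa using h₁.reduce_eq⟩
  | cons y L₂ ih =>
    rcases L₁.eq_nil_or_concat with rfl | ⟨L₁, z, rfl⟩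
    · exact ⟨[], [], y :: L₂, rfl, by simp [invRev], by simpa using h₂.reduce_eq⟩
    rw [List.concat_eq_append] at h₁ ⊢
    by_cases hz : z = (y.1, !y.2)
    · obtain ⟨p, c, q, rfl, hL₂, hpq⟩ :=
        ih (h₁.infix (L₁ := L₁) ⟨[], [z], by simp⟩) (h₂.infix ⟨[y], [], by simp⟩)
      refine ⟨p, c ++ [z], q, by simp, by simp [hL₂, invRev, hz], ?_⟩
      have hstep : Red.Step (p ++ c ++ [z] ++ y :: L₂) (p ++ c ++ L₂) := by
        simpa [hz] using Red.Step.not (L₁ := p ++ c) (L₂ := L₂) (x := y.1) (b := !y.2)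
      rw [reduce.Step.eq hstep, hpq]
    · refine ⟨L₁ ++ [z], [], y :: L₂, by simp, by simp [invRev], ?_⟩
      refine (IsReduced.append_overlap h₁ ?_ (List.cons_ne_nil _ _)).reduce_eq
      refine isReduced_cons_cons.2 ⟨fun h => ?_, h₂⟩
      contrapose! hz
      ext
      · exact h
      · cases hz' : z.2 <;> cases hy : y.2 <;> simp_all

theorem exists_toWord_mul (x y : FreeGroup α) :
    ∃ p c q, x.toWord = p ++ c ∧ y.toWord = invRev c ++ q ∧ (x * y).toWord = p ++ q := by
  rw [toWord_mul]
  exact isReduced_toWord.exists_reduce_append isReduced_toWord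

theorem exists_norm_add_norm_eq_and_toWord_take_drop (x y : FreeGroup α) :
    ∃ j, x.norm + y.norm = (x * y).norm + 2 * j ∧
      x.toWord.take (x.norm - j) = (x * y).toWord.take (x.norm - j) ∧
      y.toWord.drop j = (x * y).toWord.drop (x.norm - j) := by
  obtain ⟨p, c, q, hx, hy, hxy⟩ := exists_toWord_mul x y
  have hp : p.length = x.norm - c.length := by simp [norm, hx]
  refine ⟨c.length, by simp [norm, hx, hy, hxy]; omega, ?_, ?_⟩
  · rw [hx, hxy, List.take_left' hp, List.take_left' hp]
  · rw [hy, hxy, List.drop_left' (invRev_length), List.drop_left' hp]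

theorem sum_sq_norm_sum_sphere_le {R : Type*} [SeminormedRing R] (a b : FreeGroup α →₀ R)
    {k s t : ℕ} (G : Finset (FreeGroup α)) (hG : ∀ g ∈ G, g.norm = k)
    (F : FreeGroup α → Finset (FreeGroup α))
    (hF : ∀ g ∈ G, ∀ h ∈ F g, h.norm = s ∧ (h⁻¹ * g).norm = t) :
    ∑ g ∈ G, ‖∑ h ∈ F g, a h * b (h⁻¹ * g)‖ ^ 2 ≤
      (∑ h ∈ a.support, ‖a h‖ ^ 2) * ∑ x ∈ b.support, ‖b x‖ ^ 2 := by
  -- `j` is the length of the segment cancelled in the product `h * (h⁻¹ * g)`.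
  set j := (s + t - k) / 2
  refine sum_sq_norm_sum_mul_le a b G F (fun g h => h⁻¹ * g)
    (fun g => (mul_left_injective g).comp inv_injective)
    (fun h => h.toWord.take (s - j)) (fun x => x.toWord.drop j)
    (fun g => (g.toWord.take (s - j), g.toWord.drop (s - j)))
    (fun g _ g' _ e => toWord_injective ?_) fun g hg h hh => ?_
  · simp only [Prod.ext_iff] at e
    rw [← List.take_append_drop (s - j) g.toWord, e.1, e.2, List.take_append_drop]
  · obtain ⟨hs, ht⟩ := hF g hg h hh
    obtain ⟨i, hi, htake, hdrop⟩ := exists_norm_add_norm_eq_and_toWord_take_drop h (h⁻¹ * g)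
    rw [mul_inv_cancel_left] at hi htake hdrop
    obtain rfl : i = j := by have := hG g hg; omega
    rw [hs] at htake hdrop
    exact ⟨htake, hdrop⟩

end FreeGroup

namespace Annealed

variable {r : ℕ}

lemma wlen_eq_norm (g : FG r) : wlen g = g.norm := rfl

lemma coeff_mul_eq_sum (a b : MonoidAlgebra ℂ (FG r)) (g : FG r) :
    (a * b).coeff g = ∑ h ∈ a.coeff.support, a.coeff h * b.coeff (h⁻¹ * g) :=
  MonoidAlgebra.coeff_mul_apply_left a b g

lemma l2norm_mul_l2norm (a b : MonoidAlgebra ℂ (FG r)) :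
    l2norm a * l2norm b =
      √((∑ h ∈ a.coeff.support, ‖a.coeff h‖ ^ 2) * ∑ x ∈ b.coeff.support, ‖b.coeff x‖ ^ 2) :=
  (Real.sqrt_mul (sum_nonneg fun _ _ => by positivity) _).symm

/-- The pairs `(|h|, |h⁻¹ g|)` that can occur in `(a * b) g` for `|g| = k`. -/
def lengthPairs (n m k : ℕ) : Finset (ℕ × ℕ) :=
  {z ∈ range (n + 1) ×ˢ range (m + 1) | k ≤ z.1 + z.2}

lemma mem_lengthPairs {n m k : ℕ} {z : ℕ × ℕ} :
    z ∈ lengthPairs n m k ↔ z.1 ≤ n ∧ z.2 ≤ m ∧ k ≤ z.1 + z.2 := by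
  simp only [lengthPairs, mem_filter, mem_product, mem_range]
  omega

lemma card_lengthPairs_le (n m k : ℕ) : #(lengthPairs n m k) ≤ (n + m + 1 - k) ^ 2 := by
  have hsub : lengthPairs n m k ⊆ Icc (k - m) n ×ˢ Icc (k - n) m := by
    intro z hz
    simp only [mem_lengthPairs, mem_product, mem_Icc] at hz ⊢
    omega
  refine (card_le_card hsub).trans ?_
  rw [card_product, Nat.card_Icc, Nat.card_Icc, sq]
  exact Nat.mul_le_mul (by omega) (by omega)

variable {n m : ℕ} {a b : MonoidAlgebra ℂ (FG r)}

lemma coeff_mul_eq_sum_lengthPairs (hsa : ∀ g ∈ a.coeff.support, wlen g ≤ n)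
    (hsb : ∀ g ∈ b.coeff.support, wlen g ≤ m) (g : FG r) :
    (a * b).coeff g = ∑ z ∈ lengthPairs n m (wlen g),
      ∑ h ∈ {h ∈ a.coeff.support | h⁻¹ * g ∈ b.coeff.support} with (wlen h, wlen (h⁻¹ * g)) = z,
        a.coeff h * b.coeff (h⁻¹ * g) := by
  have hvanish : ∀ h ∈ a.coeff.support, a.coeff h * b.coeff (h⁻¹ * g) ≠ 0 →
      h⁻¹ * g ∈ b.coeff.support := fun h _ hne =>
    Finsupp.mem_support_iff.2 (right_ne_zero_of_mul hne)
  have hmaps : ∀ h ∈ {h ∈ a.coeff.support | h⁻¹ * g ∈ b.coeff.support},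
      (wlen h, wlen (h⁻¹ * g)) ∈ lengthPairs n m (wlen g) := by
    intro h hh
    obtain ⟨ha, hb⟩ := mem_filter.1 hh
    refine mem_lengthPairs.2 ⟨hsa h ha, hsb _ hb, ?_⟩
    simpa [wlen_eq_norm] using FreeGroup.norm_mul_le h (h⁻¹ * g)
  rw [coeff_mul_eq_sum, ← sum_filter_of_ne hvanish, sum_fiberwise_of_maps_to hmaps]

lemma coeff_mul_eq_zero_of_lt (hsa : ∀ g ∈ a.coeff.support, wlen g ≤ n)
    (hsb : ∀ g ∈ b.coeff.support, wlen g ≤ m) {g : FG r} (hg : n + m < wlen g) :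
    (a * b).coeff g = 0 := by
  rw [coeff_mul_eq_sum_lengthPairs hsa hsb]
  exact sum_eq_zero fun z hz => absurd (mem_lengthPairs.1 hz) (by omega)

lemma l2normSphere_mul_le (hsa : ∀ g ∈ a.coeff.support, wlen g ≤ n)
    (hsb : ∀ g ∈ b.coeff.support, wlen g ≤ m) (k : ℕ) :
    l2normSphere (a * b) k ≤ #(lengthPairs n m k) * (l2norm a * l2norm b) := by
  set G := (a * b).coeff.support.filter (fun g => wlen g = k)
  set T : ℕ × ℕ → FG r → ℂ := fun z g =>
    ∑ h ∈ {h ∈ a.coeff.support | h⁻¹ * g ∈ b.coeff.support} with (wlen h, wlen (h⁻¹ * g)) = z,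
      a.coeff h * b.coeff (h⁻¹ * g)
  calc l2normSphere (a * b) k = √(∑ g ∈ G, ‖∑ z ∈ lengthPairs n m k, T z g‖ ^ 2) := by
        refine congrArg _ (sum_congr rfl fun g hg => ?_)
        rw [coeff_mul_eq_sum_lengthPairs hsa hsb, (mem_filter.1 hg).2]
    _ ≤ ∑ z ∈ lengthPairs n m k, √(∑ g ∈ G, ‖T z g‖ ^ 2) := Real.sqrt_sum_sq_norm_sum_le _ _ _
    _ ≤ ∑ _z ∈ lengthPairs n m k, l2norm a * l2norm b := by
        refine sum_le_sum fun z _ => ?_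
        rw [l2norm_mul_l2norm]
        refine Real.sqrt_le_sqrt (FreeGroup.sum_sq_norm_sum_sphere_le (s := z.1) (t := z.2)
          a.coeff b.coeff G (fun g hg => (mem_filter.1 hg).2) _ fun g _ h hh => ?_)
        exact Prod.ext_iff.1 (mem_filter.1 hh).2
    _ = _ := by rw [sum_const, nsmul_eq_mul]

lemma l2normSphere_mul_zero_le (a b : MonoidAlgebra ℂ (FG r)) :
    l2normSphere (a * b) 0 ≤ l2norm a * l2norm b := by
  rw [l2normSphere, l2norm_mul_l2norm]
  refine Real.sqrt_le_sqrt ?_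
  simp only [coeff_mul_eq_sum]
  refine sum_sq_norm_sum_mul_le a.coeff b.coeff _ (fun _ => a.coeff.support) (fun g h => h⁻¹ * g)
    (fun g => (mul_left_injective g).comp inv_injective) (fun _ => ()) (fun _ => ())
    (fun _ => ((), ())) (fun g hg g' hg' _ => ?_) fun _ _ _ _ => ⟨rfl, rfl⟩
  simp only [mem_coe, mem_filter, wlen_eq_norm, FreeGroup.norm_eq_zero] at hg hg'
  rw [hg.2, hg'.2]

theorem statement16_general (r : ℕ) (n m : ℕ)
    (a b : MonoidAlgebra ℂ (FG r))
    (hsa : ∀ g ∈ a.coeff.support, wlen g ≤ n) (hsb : ∀ g ∈ b.coeff.support, wlen g ≤ m) :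
    l2normSphere (a * b) 0 ≤ l2norm a * l2norm b ∧
      (∀ kk : ℕ, 1 ≤ kk → kk ≤ n + m →
        l2normSphere (a * b) kk ≤ ((n : ℝ) + (m : ℝ) + 1 - (kk : ℝ)) ^ 2 * (l2norm a * l2norm b)) ∧
      ∀ g : FG r, n + m < wlen g → (a * b).coeff g = 0 := by
  refine ⟨l2normSphere_mul_zero_le a b, fun k _ hk => ?_, fun g => coeff_mul_eq_zero_of_lt hsa hsb⟩
  have hnorms : 0 ≤ l2norm a * l2norm b := by rw [l2norm_mul_l2norm]; positivity
  calc l2normSphere (a * b) k ≤ #(lengthPairs n m k) * (l2norm a * l2norm b) :=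
        l2normSphere_mul_le hsa hsb k
    _ ≤ ((n + m + 1 - k : ℕ) : ℝ) ^ 2 * (l2norm a * l2norm b) := by
        gcongr
        exact_mod_cast card_lengthPairs_le n m k
    _ = _ := by rw [Nat.cast_sub (by omega)]; push_cast; ring

theorem statement16 (r : ℕ) (hr : 1 ≤ r) (n m : ℕ)
    (a b : MonoidAlgebra ℂ (FG r))
    (hsa : ∀ g ∈ a.coeff.support, wlen g ≤ n) (hsb : ∀ g ∈ b.coeff.support, wlen g ≤ m) :
    l2normSphere (a * b) 0 ≤ l2norm a * l2norm b ∧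
      (∀ kk : ℕ, 1 ≤ kk → kk ≤ n + m →
        l2normSphere (a * b) kk ≤ ((n : ℝ) + (m : ℝ) + 1 - (kk : ℝ)) ^ 2 * (l2norm a * l2norm b)) ∧
      ∀ g : FG r, n + m < wlen g → (a * b).coeff g = 0 :=
  statement16_general r n m a b hsa hsb

end Annealed
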